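/- arXiv:1911.03806 — 5 statements merged into one kernel-verified Lean document; each statement's English description precedes it below -/
import Mathlib

section
/- With d = √((x_E-x_P)²+(y_E-y_P)²) > 0 and α ∈ (0,1), the gradient of y̲ with respect to the evader coordinates satisfies √((∂y̲/∂x_E)² + (∂y̲/∂y_E)²) = (1/(1-α²))·√(1 + α² - 2α(y_E-y_P)/d). -/
/-! The gradient is `1/(1-α²)` times the vector `(-α u, 1 - α v)`, where `(u, v)` is the unit vector
from the pursuer to the evader; by the law of cosines its squared length is `1 + α² - 2αv`. -/

theorem sq_mul_add_one_sub_mul_sq_of_sq_add_sq_eq_one {u v : ℝ} (α : ℝ) (huv : u ^ 2 + v ^ 2 = 1) :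
    (α * u) ^ 2 + (1 - α * v) ^ 2 = 1 + α ^ 2 - 2 * α * v := by
  linear_combination α ^ 2 * huv

theorem Real.sqrt_mul_sq_add_mul_sq {c : ℝ} (hc : 0 ≤ c) (a b : ℝ) :
    √((c * a) ^ 2 + (c * b) ^ 2) = c * √(a ^ 2 + b ^ 2) := by
  rw [show (c * a) ^ 2 + (c * b) ^ 2 = c ^ 2 * (a ^ 2 + b ^ 2) by ring,
    Real.sqrt_mul (sq_nonneg c), Real.sqrt_sq hc]

theorem div_sq_add_div_sq_eq_one {x y d : ℝ} (hd : d = √(x ^ 2 + y ^ 2)) (hdpos : 0 < d) :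
    (x / d) ^ 2 + (y / d) ^ 2 = 1 := by
  have hd2 : d ^ 2 = x ^ 2 + y ^ 2 := by
    rw [hd, Real.sq_sqrt (by positivity)]
  field_simp
  exact hd2.symm

/-- Norm of the evader-gradient of `y̲`:
`√((∂y̲/∂x_E)² + (∂y̲/∂y_E)²) = (1/(1-α²))·√(1 + α² - 2α(y_E-y_P)/d)`. -/
theorem evader_gradient_norm (xP yP xE yE α d : ℝ)
    (hα0 : 0 < α) (hα1 : α < 1)
    (hd : d = Real.sqrt ((xE - xP)^2 + (yE - yP)^2)) (hdpos : 0 < d) :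
    Real.sqrt ((-(α / (1 - α^2)) * (xE - xP) / d)^2
        + ((1 / (1 - α^2)) * (1 - α * (yE - yP) / d))^2)
      = (1 / (1 - α^2)) * Real.sqrt (1 + α^2 - 2 * α * (yE - yP) / d) := by
  have hc : 0 ≤ 1 / (1 - α ^ 2) := by
    have : α ^ 2 < 1 := by nlinarith
    exact one_div_nonneg.mpr (by linarith)
  have hunit := div_sq_add_div_sq_eq_one hd hdpos
  calc √((-(α / (1 - α ^ 2)) * (xE - xP) / d) ^ 2
          + ((1 / (1 - α ^ 2)) * (1 - α * (yE - yP) / d)) ^ 2)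
      = √((1 / (1 - α ^ 2) * (-(α * ((xE - xP) / d)))) ^ 2
          + (1 / (1 - α ^ 2) * (1 - α * ((yE - yP) / d))) ^ 2) := by ring_nf
    _ = 1 / (1 - α ^ 2) * √((α * ((xE - xP) / d)) ^ 2 + (1 - α * ((yE - yP) / d)) ^ 2) := by
      rw [Real.sqrt_mul_sq_add_mul_sq hc, neg_sq]
    _ = 1 / (1 - α ^ 2) * √(1 + α ^ 2 - 2 * α * (yE - yP) / d) := by
      rw [sq_mul_add_one_sub_mul_sq_of_sq_add_sq_eq_one α hunit, mul_div_assoc]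
end

section
/- Let the optimal aimpoint be (x*, y*) with x* = (x_E - α²x_P)/(1-α²) and y* = (y_E - α²y_P - αd)/(1-α²), d = dist(E,P) > 0, α ∈ (0,1). Then x* - x_E = -α·d·∂y̲/∂x_E, y* - y_E = -α·d·∂y̲/∂y_E, x* - x_P = (d/α)·∂y̲/∂x_P, and y* - y_P = (d/α)·∂y̲/∂y_P, where the partials of y̲ = (y_E - α²y_P - αd)/(1-α²) are as follows: ∂y̲/∂x_E = -(α/(1-α²))(x_E-x_P)/d, ∂y̲/∂y_E = (1/(1-α²))(1-α(y_E-y_P)/d), ∂y̲/∂x_P = (α/(1-α²))(x_E-x_P)/d, ∂y̲/∂y_P = (α/(1-α²))(-α+(y_E-y_P)/d). -/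
theorem aimpoint_gradient_identities_general (xP yP xE yE α d : ℝ)
    (hα0 : 0 < α) (hα1 : α < 1) (hdpos : 0 < d) :
    (xE - α^2 * xP) / (1 - α^2) - xE
        = -(α * d) * (-(α / (1 - α^2)) * (xE - xP) / d)
    ∧ (yE - α^2 * yP - α * d) / (1 - α^2) - yE
        = -(α * d) * ((1 / (1 - α^2)) * (1 - α * (yE - yP) / d))
    ∧ (xE - α^2 * xP) / (1 - α^2) - xP
        = (d / α) * ((α / (1 - α^2)) * (xE - xP) / d)
    ∧ (yE - α^2 * yP - α * d) / (1 - α^2) - yP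
        = (d / α) * ((α / (1 - α^2)) * (-α + (yE - yP) / d)) := by
  have hα : α ≠ 0 := hα0.ne'
  have hd : d ≠ 0 := hdpos.ne'
  have hα2 : 1 - α ^ 2 ≠ 0 := (sub_pos.2 (pow_lt_one₀ hα0.le hα1 two_ne_zero)).ne'
  refine ⟨?_, ?_, ?_, ?_⟩ <;> field_simp <;> ring

/-- The vectors from each player to the optimal aimpoint `(x*,y*)` (the lowest
point of the Apollonius circle) are proportional to the gradients of `y̲`. -/
theorem aimpoint_gradient_identities (xP yP xE yE α d : ℝ)
    (hα0 : 0 < α) (hα1 : α < 1)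
    (hd : d = Real.sqrt ((xE - xP)^2 + (yE - yP)^2)) (hdpos : 0 < d) :
    (xE - α^2 * xP) / (1 - α^2) - xE
        = -(α * d) * (-(α / (1 - α^2)) * (xE - xP) / d)
    ∧ (yE - α^2 * yP - α * d) / (1 - α^2) - yE
        = -(α * d) * ((1 / (1 - α^2)) * (1 - α * (yE - yP) / d))
    ∧ (xE - α^2 * xP) / (1 - α^2) - xP
        = (d / α) * ((α / (1 - α^2)) * (xE - xP) / d)
    ∧ (yE - α^2 * yP - α * d) / (1 - α^2) - yP
        = (d / α) * ((α / (1 - α^2)) * (-α + (yE - yP) / d)) :=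
  aimpoint_gradient_identities_general xP yP xE yE α d hα0 hα1 hdpos
end

section
/- Let α ∈ (0,1), P = (x_P,y_P), E = (x_E,y_E) with d = dist(E,P) > 0, and aimpoint I = (x*,y*) with x* = (x_E-α²x_P)/(1-α²), y* = (y_E-α²y_P-αd)/(1-α²). Assume I ≠ E and I ≠ P. Let u_E = (I-E)/dist(I,E) and u_P = (I-P)/dist(I,P) be the optimal unit heading vectors, and let ∇_E y̲, ∇_P y̲ denote the gradients of y̲ = (y_E-α²y_P-αd)/(1-α²) with respect to evader and pursuer coordinates. Then for any v_P > 0 and v_E = α·v_P, v_E·⟨∇_E y̲, u_E⟩ + v_P·⟨∇_P y̲, u_P⟩ = 0. -/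
/-!
Write `a = x_E - x_P`, `b = y_E - y_P`, `k = 1 - α²`. Both gradients of `y̲` are parallel to the
displacements towards the aimpoint: `∇_E y̲ = -(1/(k d)) w` with `I - E = (α/k) w`, `w = (α a, α b - d)`,
and `∇_P y̲ = (α/(k d)) z` with `I - P = (1/k) z`, `z = (a, b - α d)`. Hence the two terms of the
Hamiltonian are `-α v_P |w|/(k d)` and `α v_P |z|/(k d)`, and they cancel because `|w| = |z|`
(the aimpoint lies on the Apollonius circle, `|I - P| = |I - E| / α`).
-/

lemma mul_dot_unit_of_pos_smul {m c : ℝ} (hc : 0 < c) (p q : ℝ) :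
    (m * p) * (c * p / Real.sqrt ((c * p) ^ 2 + (c * q) ^ 2))
      + (m * q) * (c * q / Real.sqrt ((c * p) ^ 2 + (c * q) ^ 2))
      = m * Real.sqrt (p ^ 2 + q ^ 2) := by
  have hscale : Real.sqrt ((c * p) ^ 2 + (c * q) ^ 2) = c * Real.sqrt (p ^ 2 + q ^ 2) := by
    rw [show (c * p) ^ 2 + (c * q) ^ 2 = c ^ 2 * (p ^ 2 + q ^ 2) by ring,
      Real.sqrt_mul (sq_nonneg c), Real.sqrt_sq hc.le]
  have hsq : p ^ 2 + q ^ 2 = Real.sqrt (p ^ 2 + q ^ 2) ^ 2 :=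
    (Real.sq_sqrt (by positivity)).symm
  rw [hscale]
  rcases (Real.sqrt_nonneg (p ^ 2 + q ^ 2)).eq_or_lt with hs | hs
  · rw [← hs, mul_zero, div_zero, div_zero, mul_zero, mul_zero, mul_zero, add_zero]
  · field_simp
    linear_combination m * hsq

lemma sq_add_sub_mul_sq_eq_of_sq_add_sq {a b d : ℝ} (hd : a ^ 2 + b ^ 2 = d ^ 2) (α : ℝ) :
    a ^ 2 + (b - α * d) ^ 2 = (α * a) ^ 2 + (α * b - d) ^ 2 := by
  linear_combination (1 - α ^ 2) * hd

theorem hji_single_pair_general (xP yP xE yE α vP vE : ℝ)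
    (hα0 : 0 < α) (hα1 : α < 1)
    (hvE : vE = α * vP)
    (d : ℝ) (hd : d = Real.sqrt ((xE - xP)^2 + (yE - yP)^2)) (hdpos : 0 < d)
    (xs ys : ℝ)
    (hxs : xs = (xE - α^2 * xP) / (1 - α^2))
    (hys : ys = (yE - α^2 * yP - α * d) / (1 - α^2)) :
    vE * ((-(α / (1 - α^2)) * (xE - xP) / d)
            * ((xs - xE) / Real.sqrt ((xs - xE)^2 + (ys - yE)^2))
          + ((1 / (1 - α^2)) * (1 - α * (yE - yP) / d))
            * ((ys - yE) / Real.sqrt ((xs - xE)^2 + (ys - yE)^2)))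
      + vP * (((α / (1 - α^2)) * (xE - xP) / d)
            * ((xs - xP) / Real.sqrt ((xs - xP)^2 + (ys - yP)^2))
          + ((α / (1 - α^2)) * (-α + (yE - yP) / d))
            * ((ys - yP) / Real.sqrt ((xs - xP)^2 + (ys - yP)^2))) = 0 := by
  have hk : 0 < 1 - α ^ 2 := by nlinarith
  set k := 1 - α ^ 2
  set a := xE - xP
  set b := yE - yP
  have hd2 : a ^ 2 + b ^ 2 = d ^ 2 := by rw [hd, Real.sq_sqrt (by positivity)]
  have hxsE : xs - xE = α / k * (α * a) := by rw [hxs]; field_simp; ring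
  have hysE : ys - yE = α / k * (α * b - d) := by rw [hys]; field_simp; ring
  have hxsP : xs - xP = 1 / k * a := by rw [hxs]; field_simp; ring
  have hysP : ys - yP = 1 / k * (b - α * d) := by rw [hys]; field_simp; ring
  have hgradE₁ : -(α / k) * a / d = -(1 / (k * d)) * (α * a) := by field_simp
  have hgradE₂ : 1 / k * (1 - α * b / d) = -(1 / (k * d)) * (α * b - d) := by
    field_simp; ring
  have hgradP₁ : α / k * a / d = α / (k * d) * a := by field_simp
  have hgradP₂ : α / k * (-α + b / d) = α / (k * d) * (b - α * d) := by field_simp; ring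
  rw [hxsE, hysE, hxsP, hysP, hgradE₁, hgradE₂, hgradP₁, hgradP₂,
    mul_dot_unit_of_pos_smul (by positivity), mul_dot_unit_of_pos_smul (by positivity),
    sq_add_sub_mul_sq_eq_of_sq_add_sq hd2, hvE]
  ring

/-- The single-pair Value contribution `y̲` satisfies the stationary HJI
equation along the optimal headings: with unit heading vectors toward the
aimpoint `I`, `v_E·⟨∇_E y̲, u_E⟩ + v_P·⟨∇_P y̲, u_P⟩ = 0`. -/
theorem hji_single_pair (xP yP xE yE α vP vE : ℝ)
    (hα0 : 0 < α) (hα1 : α < 1)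
    (hvP : 0 < vP) (hvE : vE = α * vP)
    (d : ℝ) (hd : d = Real.sqrt ((xE - xP)^2 + (yE - yP)^2)) (hdpos : 0 < d)
    (xs ys : ℝ)
    (hxs : xs = (xE - α^2 * xP) / (1 - α^2))
    (hys : ys = (yE - α^2 * yP - α * d) / (1 - α^2))
    (hIE : (xs, ys) ≠ (xE, yE)) (hIP : (xs, ys) ≠ (xP, yP)) :
    vE * ((-(α / (1 - α^2)) * (xE - xP) / d)
            * ((xs - xE) / Real.sqrt ((xs - xE)^2 + (ys - yE)^2))
          + ((1 / (1 - α^2)) * (1 - α * (yE - yP) / d))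
            * ((ys - yE) / Real.sqrt ((xs - xE)^2 + (ys - yE)^2)))
      + vP * (((α / (1 - α^2)) * (xE - xP) / d)
            * ((xs - xP) / Real.sqrt ((xs - xP)^2 + (ys - yP)^2))
          + ((α / (1 - α^2)) * (-α + (yE - yP) / d))
            * ((ys - yP) / Real.sqrt ((xs - xP)^2 + (ys - yP)^2))) = 0 :=
  hji_single_pair_general xP yP xE yE α vP vE hα0 hα1 hvE d hd hdpos xs ys hxs hys
end

section
/- Let α ∈ (0,1), d = dist(E,P) > 0, and y̲ = (y_E - α²y_P - αd)/(1-α²). If y_E > 0 and y̲ > 0 then for every point (x,y) with dist((x,y),E) = α·dist((x,y),P) we have y > 0; i.e., if the lowest point of the Apollonius circle is above the x-axis, the entire Apollonius circle lies strictly above the x-axis. -/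
/-!
Expanding `‖z - e‖² = α²‖z - p‖²` shows that, for `0 ≤ α < 1`, the locus is the sphere with
center `(e - α²p)/(1 - α²)` and radius `α‖e - p‖/(1 - α²)`. The ordinate of a point of a
sphere is at least that of the center minus the radius, and for this sphere that lower bound
is exactly `y̲`.
-/

open Metric

section Apollonius

variable {V : Type*} [NormedAddCommGroup V] [InnerProductSpace ℝ V]

noncomputable def apolloniusCenter (α : ℝ) (e p : V) : V := (1 - α ^ 2)⁻¹ • (e - α ^ 2 • p)

noncomputable def apolloniusRadius (α : ℝ) (e p : V) : ℝ := α * dist e p / (1 - α ^ 2)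

theorem norm_smul_sub_sub_smul_sq (α : ℝ) (z e p : V) :
    ‖(1 - α ^ 2) • z - (e - α ^ 2 • p)‖ ^ 2
      = α ^ 2 * ‖e - p‖ ^ 2 + (1 - α ^ 2) * (‖z - e‖ ^ 2 - α ^ 2 * ‖z - p‖ ^ 2) := by
  have hlhs : (1 - α ^ 2) • z - (e - α ^ 2 • p) = (z - e) - α ^ 2 • (z - p) := by
    simp only [sub_smul, one_smul, smul_sub]; abel
  have hep : ‖e - p‖ ^ 2 = ‖z - p‖ ^ 2 - 2 * inner ℝ (z - e) (z - p) + ‖z - e‖ ^ 2 := by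
    rw [show e - p = (z - p) - (z - e) by abel, norm_sub_sq_real, real_inner_comm]
  rw [hlhs, norm_sub_sq_real, inner_smul_right, norm_smul, Real.norm_eq_abs,
    abs_of_nonneg (sq_nonneg α), hep]
  ring

theorem mem_sphere_apolloniusCenter {α : ℝ} (hα0 : 0 ≤ α) (hα1 : α < 1) {z e p : V}
    (h : dist z e = α * dist z p) :
    z ∈ sphere (apolloniusCenter α e p) (apolloniusRadius α e p) := by
  have hs : 0 < 1 - α ^ 2 := by nlinarith
  have hscale : (1 - α ^ 2) • (z - apolloniusCenter α e p) = (1 - α ^ 2) • z - (e - α ^ 2 • p) := by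
    rw [apolloniusCenter, smul_sub, smul_inv_smul₀ hs.ne']
  have hsq : ((1 - α ^ 2) * dist z (apolloniusCenter α e p)) ^ 2 = (α * dist e p) ^ 2 := by
    rw [dist_eq_norm, ← abs_of_pos hs, ← Real.norm_eq_abs, ← norm_smul, hscale,
      norm_smul_sub_sub_smul_sq, ← dist_eq_norm, ← dist_eq_norm, ← dist_eq_norm, h]
    ring
  have heq : (1 - α ^ 2) * dist z (apolloniusCenter α e p) = α * dist e p :=
    (sq_eq_sq₀ (by positivity) (by positivity)).1 hsq
  rw [mem_sphere, apolloniusRadius, eq_div_iff hs.ne', mul_comm, heq]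

end Apollonius

theorem EuclideanSpace.sub_le_apply_of_mem_sphere {ι : Type*} [Fintype ι]
    {c z : EuclideanSpace ℝ ι} {r : ℝ} (hz : z ∈ sphere c r) (i : ι) : c i - r ≤ z i := by
  have hi : |z i - c i| ≤ r := mem_sphere.1 hz ▸ Real.dist_eq _ _ ▸ PiLp.dist_apply_le z c i
  linarith [(abs_sub_le_iff.1 hi).2]

theorem EuclideanSpace.dist_two_eq_sqrt (a b u v : ℝ) :
    dist !₂[a, b] !₂[u, v] = Real.sqrt ((a - u) ^ 2 + (b - v) ^ 2) := by
  simp only [EuclideanSpace.dist_eq, Real.dist_eq, sq_abs, Fin.sum_univ_two,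
    Matrix.cons_val_zero, Matrix.cons_val_one, Matrix.cons_val_fin_one]

theorem circle_above_border_general (xP yP xE yE α : ℝ)
    (hα0 : 0 < α) (hα1 : α < 1)
    (d : ℝ) (hd : d = Real.sqrt ((xE - xP)^2 + (yE - yP)^2))
    (hylow : 0 < (yE - α^2 * yP - α * d) / (1 - α^2)) :
    ∀ x y : ℝ,
      Real.sqrt ((x - xE)^2 + (y - yE)^2)
        = α * Real.sqrt ((x - xP)^2 + (y - yP)^2) →
      0 < y := by
  intro x y h
  set E : EuclideanSpace ℝ (Fin 2) := !₂[xE, yE]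
  set P : EuclideanSpace ℝ (Fin 2) := !₂[xP, yP]
  have hZ : !₂[x, y] ∈ sphere (apolloniusCenter α E P) (apolloniusRadius α E P) :=
    mem_sphere_apolloniusCenter hα0.le hα1
      (by rw [EuclideanSpace.dist_two_eq_sqrt, EuclideanSpace.dist_two_eq_sqrt, h])
  have hlowest : apolloniusCenter α E P 1 - apolloniusRadius α E P
      = (yE - α^2 * yP - α * d) / (1 - α^2) := by
    simp only [apolloniusCenter, apolloniusRadius, PiLp.smul_apply, PiLp.sub_apply, smul_eq_mul,
      Matrix.cons_val_one, Matrix.cons_val_fin_one, E, P, EuclideanSpace.dist_two_eq_sqrt, ← hd]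
    ring
  have hy : apolloniusCenter α E P 1 - apolloniusRadius α E P ≤ y :=
    EuclideanSpace.sub_le_apply_of_mem_sphere hZ 1
  linarith

/-- If the lowest point of the Apollonius circle is strictly above the border
(the `x`-axis), then the entire Apollonius circle lies strictly above it. -/
theorem circle_above_border (xP yP xE yE α : ℝ)
    (hα0 : 0 < α) (hα1 : α < 1)
    (d : ℝ) (hd : d = Real.sqrt ((xE - xP)^2 + (yE - yP)^2)) (hdpos : 0 < d)
    (hyE : 0 < yE)
    (hylow : 0 < (yE - α^2 * yP - α * d) / (1 - α^2)) :
    ∀ x y : ℝ,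
      Real.sqrt ((x - xE)^2 + (y - yE)^2)
        = α * Real.sqrt ((x - xP)^2 + (y - yP)^2) →
      0 < y :=
  circle_above_border_general xP yP xE yE α hα0 hα1 d hd hylow
end

section
/- Let α ∈ (0,1), points E ≠ P with d = dist(E,P), and y̲(E,P) = (y_E - α²y_P - αd)/(1-α²). Under simultaneous straight-line motion of E toward the aimpoint I = (x_c, y_c - r) at speed v_E and of P toward I at speed v_P = v_E/α (for time t small enough that neither player reaches I), the value y̲(E(t), P(t)) computed from the new positions is constant in t and equal to y̲(E,P). -/
/-- Lowest point of the Apollonius circle as a function of the evader and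
pursuer positions. -/
noncomputable def ylowFun (α xP yP xE yE : ℝ) : ℝ :=
  (yE - α^2 * yP - α * Real.sqrt ((xE - xP)^2 + (yE - yP)^2)) / (1 - α^2)

set_option maxHeartbeats 1000000 in
/-- The Value contribution `y̲` is constant along optimal trajectories: if both
players head straight toward the optimal aimpoint `I` (the lowest point of the
Apollonius circle) with matched speeds `v_P = v_E/α`, then `y̲` evaluated at the
moved positions equals its initial value, for every `t` before either player
reaches `I`. -/
theorem value_constant_along_optimal (xP yP xE yE α vE vP t : ℝ)
    (hα0 : 0 < α) (hα1 : α < 1) (hEP : (xE, yE) ≠ (xP, yP))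
    (hvE : 0 < vE) (hvP : vP = vE / α) (ht0 : 0 ≤ t)
    (d : ℝ) (hd : d = Real.sqrt ((xE - xP)^2 + (yE - yP)^2))
    (xs ys : ℝ)
    (hxs : xs = (xE - α^2 * xP) / (1 - α^2))
    (hys : ys = (yE - α^2 * yP - α * d) / (1 - α^2))
    (ht1 : t * vE < Real.sqrt ((xs - xE)^2 + (ys - yE)^2)) :
    ylowFun α
        (xP + t * vP * (xs - xP) / Real.sqrt ((xs - xP)^2 + (ys - yP)^2))
        (yP + t * vP * (ys - yP) / Real.sqrt ((xs - xP)^2 + (ys - yP)^2))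
        (xE + t * vE * (xs - xE) / Real.sqrt ((xs - xE)^2 + (ys - yE)^2))
        (yE + t * vE * (ys - yE) / Real.sqrt ((xs - xE)^2 + (ys - yE)^2))
      = ylowFun α xP yP xE yE := by
  have h1 : (0:ℝ) < 1 - α^2 := by nlinarith
  have hαne : α ≠ 0 := ne_of_gt hα0
  have h1ne : (1:ℝ) - α^2 ≠ 0 := ne_of_gt h1
  have hab : 0 < (xE - xP)^2 + (yE - yP)^2 := by
    rcases lt_or_eq_of_le (by positivity : (0:ℝ) ≤ (xE - xP)^2 + (yE - yP)^2) with h|h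
    · exact h
    · exfalso; apply hEP
      have hx : xE = xP := by nlinarith [sq_nonneg (xE-xP), sq_nonneg (yE-yP)]
      have hy : yE = yP := by nlinarith [sq_nonneg (xE-xP), sq_nonneg (yE-yP)]
      exact Prod.ext hx hy
  have hd0 : 0 < d := by rw [hd]; exact Real.sqrt_pos.mpr hab
  have hdsq : d^2 = (xE - xP)^2 + (yE - yP)^2 := by
    rw [hd]; exact Real.sq_sqrt hab.le
  have hble : yE - yP ≤ d := by nlinarith [sq_nonneg (xE - xP)]
  set Q := (1+α^2)*d - 2*α*(yE - yP) with hQdef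
  have hQ : 0 < Q := by
    rw [hQdef]
    nlinarith [mul_nonneg (by linarith : (0:ℝ) ≤ 2*α) (by linarith : (0:ℝ) ≤ d - (yE - yP)),
      mul_pos (by nlinarith : (0:ℝ) < (1-α)^2) hd0]
  set S := Real.sqrt (d*Q) with hSdef
  have hS0 : 0 < S := Real.sqrt_pos.mpr (mul_pos hd0 hQ)
  have hSsq : S^2 = d*Q := Real.sq_sqrt (mul_pos hd0 hQ).le
  have hSsq' : S^2 = d*((1+α^2)*d - 2*α*(yE - yP)) := by rw [hSsq, hQdef]
  have hxE : xs - xE = α^2*(xE - xP)/(1-α^2) := by rw [hxs]; field_simp; ring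
  have hyE : ys - yE = (α^2*(yE - yP) - α*d)/(1-α^2) := by rw [hys]; field_simp; ring
  have hxP : xs - xP = (xE - xP)/(1-α^2) := by rw [hxs]; field_simp; ring
  have hyP : ys - yP = ((yE - yP) - α*d)/(1-α^2) := by rw [hys]; field_simp; ring
  have hEdist : Real.sqrt ((xs - xE)^2 + (ys - yE)^2) = α*S/(1-α^2) := by
    have harg : (xs - xE)^2 + (ys - yE)^2 = (α*S/(1-α^2))^2 := by
      rw [hxE, hyE, div_pow, div_pow, div_pow, ← add_div]
      congr 1
      linear_combination (-(α^2)) * hSsq' + (-(α^4)) * hdsq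
    rw [harg, Real.sqrt_sq (div_nonneg (mul_nonneg hα0.le hS0.le) h1.le)]
  have hPdist : Real.sqrt ((xs - xP)^2 + (ys - yP)^2) = S/(1-α^2) := by
    have harg : (xs - xP)^2 + (ys - yP)^2 = (S/(1-α^2))^2 := by
      rw [hxP, hyP, div_pow, div_pow, div_pow, ← add_div]
      congr 1
      linear_combination -hSsq' - hdsq
    rw [harg, Real.sqrt_sq (div_nonneg hS0.le h1.le)]
  rw [hEdist] at ht1
  have hLpos : 0 < 1 - t*vE*(1-α^2)/(α*S) := by
    rw [sub_pos, div_lt_one (by positivity)]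
    have h2 := mul_lt_mul_of_pos_right ht1 h1
    rw [div_mul_cancel₀ _ h1ne] at h2
    linarith [h2]
  set L := 1 - t*vE*(1-α^2)/(α*S) with hLdef
  rw [hEdist, hPdist]
  have hx' : xE + t * vE * (xs - xE) / (α*S/(1-α^2)) -
      (xP + t * vP * (xs - xP) / (S/(1-α^2))) = L * (xE - xP) := by
    rw [hxE, hxP, hvP, hLdef]; field_simp; ring
  have hy' : yE + t * vE * (ys - yE) / (α*S/(1-α^2)) -
      (yP + t * vP * (ys - yP) / (S/(1-α^2))) = L * (yE - yP) := by
    rw [hyE, hyP, hvP, hLdef]; field_simp; ring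
  simp only [ylowFun]
  rw [hx', hy']
  have hsq : (L*(xE - xP))^2 + (L*(yE - yP))^2 = (L*d)^2 := by
    linear_combination (-(L^2)) * hdsq
  rw [hsq, Real.sqrt_sq (mul_nonneg hLpos.le hd0.le), ← hd]
  rw [hyE, hyP, hvP, hLdef]
  field_simp
  ring
end
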